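/- Let P ∈ ℝ^{n×k}, let Q ∈ ℝ^{m×k} have full column rank, y ∈ ℝ^m, ε ≥ 0, λ ≥ 0, and set K := QᵀQ, c := K^{-1/2} Qᵀ y, s := √(yᵀy − cᵀc), R := P K^{1/2}. Then the optimal value of min_{w ∈ ℝ^n} ‖Q Pᵀ w − y‖₂ + ε‖w‖₂ + λ‖w‖₁ equals the supremum of uᵀ c + s·t over all u ∈ ℝ^k, t ∈ ℝ, v, r ∈ ℝ^n satisfying ‖(u, t)‖₂ ≤ 1 (the Euclidean norm of the concatenated vector in ℝ^{k+1}), ‖v‖_∞ ≤ λ, ‖r‖₂ ≤ ε, and R u = v + r. -/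

import Mathlib

open Matrix

/-- Euclidean norm of a vector in `ℝ^n`. -/
noncomputable def norm2 {n : ℕ} (x : Fin n → ℝ) : ℝ := Real.sqrt (∑ i, x i ^ 2)

/-- ℓ1 norm of a vector in `ℝ^n`. -/
noncomputable def norm1 {n : ℕ} (x : Fin n → ℝ) : ℝ := ∑ i, |x i|

/-- Sup (ℓ∞) norm of a vector in `ℝ^n`. -/
noncomputable def normInf {n : ℕ} (x : Fin n → ℝ) : ℝ := ⨆ i, |x i|

open scoped ComplexOrder in
/-- The positive semidefinite square root of a positive semidefinite matrix (as defined in the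
older Mathlib, where it was `Matrix.PosSemidef.sqrt`). -/
noncomputable def Matrix.PosSemidef.sqrt {n : Type*} [Fintype n] [DecidableEq n] {𝕜 : Type*} [RCLike 𝕜]
    {A : Matrix n n 𝕜} (hA : A.PosSemidef) : Matrix n n 𝕜 :=
  (hA.1.eigenvectorUnitary : Matrix n n 𝕜) * diagonal ((↑) ∘ (√·) ∘ hA.1.eigenvalues) *
    (star hA.1.eigenvectorUnitary : Matrix n n 𝕜)

/-!
With `S = K^{1/2}` one has `‖Qx - y‖² = ‖c - Sx‖² + s²`: `s` is the norm of the component of `y`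
orthogonal to the range of `Q`. Hence the primal objective is `‖(s, c - Rᵀw)‖₂ + ε‖w‖₂ + λ‖w‖₁`, and
each of its three terms is the support function of a ball (the Euclidean unit ball of `ℝ^{k+1}`,
the `ℓ∞` ball of radius `λ`, the Euclidean ball of radius `ε`). So the objective is the maximum of
the Lagrangian `uᵀc + st + wᵀ(v + r - Ru)` over the compact convex product `D` of these balls.
Weak duality is immediate; for strong duality, separate `(0, M + δ)`, with `M` the dual value, from
the compact convex image of `D` under `(u, t, v, r) ↦ (v + r - Ru, uᵀc + st)`: after scaling, the
normal of the separating hyperplane is a `w` whose objective is below `M + δ`.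
-/

open Set Metric

theorem IsGreatest.image_prod_add {α β : Type*} {f : α → ℝ} {g : β → ℝ} {s : Set α} {t : Set β}
    {a b : ℝ} (hf : IsGreatest (f '' s) a) (hg : IsGreatest (g '' t) b) :
    IsGreatest ((fun p => f p.1 + g p.2) '' s ×ˢ t) (a + b) := by
  obtain ⟨⟨x, hx, rfl⟩, hfa⟩ := hf
  obtain ⟨⟨y, hy, rfl⟩, hgb⟩ := hg
  refine ⟨⟨(x, y), ⟨hx, hy⟩, rfl⟩, ?_⟩
  rintro _ ⟨p, ⟨hp₁, hp₂⟩, rfl⟩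
  exact add_le_add (hfa (mem_image_of_mem f hp₁)) (hgb (mem_image_of_mem g hp₂))

theorem isGreatest_inner_closedBall {E : Type*} [NormedAddCommGroup E] [InnerProductSpace ℝ E]
    (w : E) {ε : ℝ} (hε : 0 ≤ ε) :
    IsGreatest ((fun r => inner ℝ r w) '' closedBall 0 ε) (ε * ‖w‖) := by
  refine ⟨?_, ?_⟩
  · rcases eq_or_ne w 0 with rfl | hw
    · exact ⟨0, by simpa using hε, by simp⟩
    · refine ⟨(ε / ‖w‖) • w, ?_, ?_⟩
      · rw [mem_closedBall_zero_iff, norm_smul, Real.norm_of_nonneg (by positivity),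
          div_mul_cancel₀ _ (norm_ne_zero_iff.2 hw)]
      · simp only [real_inner_smul_left, real_inner_self_eq_norm_sq]
        field_simp
  · rintro _ ⟨r, hr, rfl⟩
    exact (real_inner_le_norm r w).trans
      (mul_le_mul_of_nonneg_right (mem_closedBall_zero_iff.1 hr) (norm_nonneg w))

theorem isGreatest_dotProduct_closedBall {ι : Type*} [Fintype ι] (w : ι → ℝ) {lam : ℝ}
    (hlam : 0 ≤ lam) :
    IsGreatest ((· ⬝ᵥ w) '' closedBall 0 lam) (lam * ∑ i, |w i|) := by
  refine ⟨⟨fun i => lam * SignType.sign (w i), ?_, ?_⟩, ?_⟩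
  · rw [mem_closedBall_zero_iff, pi_norm_le_iff_of_nonneg hlam]
    intro i
    rw [Real.norm_eq_abs, abs_mul, abs_of_nonneg hlam]
    exact mul_le_of_le_one_right hlam (by rcases SignType.sign (w i) with _ | _ | _ <;> simp)
  · simp [dotProduct, Finset.mul_sum, mul_assoc]
  · rintro _ ⟨v, hv, rfl⟩
    show v ⬝ᵥ w ≤ _
    rw [dotProduct, Finset.mul_sum]
    refine Finset.sum_le_sum fun i _ => ?_
    calc v i * w i ≤ |v i| * |w i| := by rw [← abs_mul]; exact le_abs_self _
      _ ≤ lam * |w i| := mul_le_mul_of_nonneg_right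
          ((norm_le_pi_norm v i).trans (mem_closedBall_zero_iff.1 hv)) (abs_nonneg _)

theorem exists_strongDual_add_lt {E : Type*} [AddCommGroup E] [Module ℝ E] [TopologicalSpace E]
    [IsTopologicalAddGroup E] [ContinuousSMul ℝ E] [LocallyConvexSpace ℝ E]
    {C : Set (E × ℝ)} (hconv : Convex ℝ C) (hclosed : IsClosed C) {a b : ℝ}
    (ha : ((0 : E), a) ∈ C) (hab : a < b) (hb : ((0 : E), b) ∉ C) :
    ∃ ℓ : StrongDual ℝ E, ∀ p ∈ C, ℓ p.1 + p.2 < b := by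
  obtain ⟨f, β, hfC, hβ⟩ := geometric_hahn_banach_closed_point hconv hclosed hb
  set ℓ := f.comp (ContinuousLinearMap.inl ℝ E ℝ)
  set τ := f (0, 1)
  have hf : ∀ p : E × ℝ, f p = ℓ p.1 + p.2 * τ := fun p => by
    rw [← smul_eq_mul, ← map_smul, ContinuousLinearMap.comp_apply, ← map_add]; simp
  have hfb : f (0, b) = b * τ := by simp [hf]
  have hτ : 0 < τ := by
    have := (hfC _ ha).trans hβ
    rw [hf, hfb, map_zero, zero_add] at this
    nlinarith
  refine ⟨τ⁻¹ • ℓ, fun p hp => ?_⟩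
  have := (hfC p hp).trans hβ
  rw [hf, hfb] at this
  rw [_root_.smul_apply, smul_eq_mul, ← mul_lt_mul_iff_right₀ hτ]
  field_simp
  linarith

theorem sInf_range_eq_sSup_of_isGreatest {ι : Type*} [Fintype ι] {C : Set ((ι → ℝ) × ℝ)}
    (hcpt : IsCompact C) (hconv : Convex ℝ C) {a : ℝ} (ha : (0, a) ∈ C)
    (F : (ι → ℝ) → ℝ) (hF : ∀ w, IsGreatest ((fun p => w ⬝ᵥ p.1 + p.2) '' C) (F w)) :
    sInf (range F) = sSup {a | (0, a) ∈ C} := by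
  classical
  have weak : ∀ b, (0, b) ∈ C → ∀ w, b ≤ F w := fun b hb w =>
    (hF w).2 ⟨(0, b), hb, by simp⟩
  have hbdd : BddAbove {a | (0, a) ∈ C} := ⟨F 0, fun b hb => weak b hb 0⟩
  refine le_antisymm (le_of_forall_pos_lt_add fun δ hδ => ?_)
    (csSup_le ⟨a, ha⟩ fun b hb => le_csInf (range_nonempty F) (forall_mem_range.2 (weak b hb)))
  have hM : ((0 : ι → ℝ), sSup {a | (0, a) ∈ C} + δ) ∉ C := fun h =>
    (le_csSup hbdd h).not_gt (lt_add_of_pos_right _ hδ)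
  obtain ⟨ℓ, hℓ⟩ := exists_strongDual_add_lt hconv hcpt.isClosed ha
    ((le_csSup hbdd ha).trans_lt (lt_add_of_pos_right _ hδ)) hM
  set w := (dotProductEquiv ℝ ι).symm ℓ.toLinearMap
  have hw : ∀ z, ℓ z = w ⬝ᵥ z := fun z => by
    rw [← dotProductEquiv_apply_apply, LinearEquiv.apply_symm_apply]; rfl
  obtain ⟨p, hp, hFw⟩ := (hF w).1
  calc sInf (range F) ≤ F w := csInf_le ⟨a, forall_mem_range.2 (weak a ha)⟩ (mem_range_self w)
    _ < _ := by simpa only [← hFw, ← hw] using hℓ p hp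

theorem norm2_eq_norm {n : ℕ} (x : Fin n → ℝ) : norm2 x = ‖WithLp.toLp 2 x‖ := by
  simp [norm2, EuclideanSpace.norm_eq]

theorem norm2_eq_sqrt_dotProduct {n : ℕ} (x : Fin n → ℝ) : norm2 x = √(x ⬝ᵥ x) := by
  simp [norm2, dotProduct, sq]

theorem norm2_vecCons {n : ℕ} (t : ℝ) (u : Fin n → ℝ) :
    norm2 (vecCons t u) = √(∑ i, u i ^ 2 + t ^ 2) := by
  rw [norm2, Fin.sum_univ_succ, add_comm]; simp

theorem setOf_norm2_le_eq_image (n : ℕ) (ε : ℝ) :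
    {x : Fin n → ℝ | norm2 x ≤ ε} = WithLp.ofLp '' closedBall (0 : EuclideanSpace ℝ (Fin n)) ε := by
  ext x
  refine ⟨fun hx => ⟨WithLp.toLp 2 x, ?_, rfl⟩, ?_⟩
  · rwa [mem_closedBall_zero_iff, ← norm2_eq_norm]
  · rintro ⟨r, hr, rfl⟩
    rwa [mem_ofPred_eq, norm2_eq_norm, WithLp.toLp_ofLp, ← mem_closedBall_zero_iff]

theorem isCompact_setOf_norm2_le (n : ℕ) (ε : ℝ) : IsCompact {x : Fin n → ℝ | norm2 x ≤ ε} := by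
  rw [setOf_norm2_le_eq_image]
  exact (isCompact_closedBall _ _).image (PiLp.continuous_ofLp 2 _)

theorem convex_setOf_norm2_le (n : ℕ) (ε : ℝ) : Convex ℝ {x : Fin n → ℝ | norm2 x ≤ ε} := by
  rw [setOf_norm2_le_eq_image]
  exact (convex_closedBall _ _).linear_image (EuclideanSpace.equiv (Fin n) ℝ).toLinearMap

theorem isGreatest_dotProduct_norm2_le {n : ℕ} (w : Fin n → ℝ) {ε : ℝ} (hε : 0 ≤ ε) :
    IsGreatest ((· ⬝ᵥ w) '' {r | norm2 r ≤ ε}) (ε * norm2 w) := by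
  rw [setOf_norm2_le_eq_image, image_image, norm2_eq_norm]
  convert isGreatest_inner_closedBall (WithLp.toLp 2 w) hε using 3 with r
  simp [EuclideanSpace.inner_eq_star_dotProduct, dotProduct_comm]

theorem normInf_eq_norm {n : ℕ} (v : Fin n → ℝ) : normInf v = ‖v‖ := by
  have hbdd : BddAbove (range fun i => |v i|) := (finite_range _).bddAbove
  refine le_antisymm (Real.iSup_le (fun i => norm_le_pi_norm v i) (norm_nonneg _)) ?_
  exact (pi_norm_le_iff_of_nonneg (Real.iSup_nonneg fun i => abs_nonneg _)).2
    fun i => le_ciSup hbdd i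

namespace Matrix

variable {n : Type*} [Fintype n] [DecidableEq n] {𝕜 : Type*} [RCLike 𝕜] {A : Matrix n n 𝕜}

open scoped ComplexOrder

theorem PosSemidef.sqrt_mul_self (hA : A.PosSemidef) : hA.sqrt * hA.sqrt = A := by
  set U : Matrix n n 𝕜 := (hA.1.eigenvectorUnitary : Matrix n n 𝕜)
  have hUU : star U * U = 1 := Unitary.coe_star_mul_self _
  have hD : diagonal ((↑) ∘ (√·) ∘ hA.1.eigenvalues : n → 𝕜) *
      diagonal ((↑) ∘ (√·) ∘ hA.1.eigenvalues) = diagonal (RCLike.ofReal ∘ hA.1.eigenvalues) := by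
    rw [diagonal_mul_diagonal]
    congr 1 with i
    simp [← RCLike.ofReal_mul, Real.mul_self_sqrt (hA.eigenvalues_nonneg i)]
  conv_rhs => rw [hA.1.spectral_theorem, Unitary.conjStarAlgAut_apply, ← hD]
  simp only [sqrt, Matrix.mul_assoc]
  rw [← Matrix.mul_assoc (star U), hUU, Matrix.one_mul]

theorem PosSemidef.isHermitian_sqrt (hA : A.PosSemidef) : hA.sqrt.IsHermitian :=
  isHermitian_mul_mul_conjTranspose _ (isHermitian_diagonal_of_self_adjoint _
    (funext fun i => by simp [RCLike.conj_ofReal]))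

theorem PosDef.isUnit_sqrt (hA : A.PosDef) : IsUnit hA.posSemidef.sqrt :=
  isUnit_of_mul_isUnit_left (hA.posSemidef.sqrt_mul_self.symm ▸ hA.isUnit)

end Matrix

theorem mulVec_sub_dotProduct_self_eq {m k : Type*} [Fintype m] [Fintype k]
    {Q : Matrix m k ℝ} {S : Matrix k k ℝ} {y : m → ℝ} {c : k → ℝ}
    (hS : Sᵀ * S = Qᵀ * Q) (hc : Sᵀ *ᵥ c = Qᵀ *ᵥ y) (x : k → ℝ) :
    (Q *ᵥ x - y) ⬝ᵥ (Q *ᵥ x - y) = (c - S *ᵥ x) ⬝ᵥ (c - S *ᵥ x) + (y ⬝ᵥ y - c ⬝ᵥ c) := by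
  have hQQ : Q *ᵥ x ⬝ᵥ Q *ᵥ x = S *ᵥ x ⬝ᵥ S *ᵥ x := by
    rw [dotProduct_mulVec, dotProduct_mulVec, ← mulVec_transpose, ← mulVec_transpose,
      mulVec_mulVec, mulVec_mulVec, hS]
  have hQy : y ⬝ᵥ Q *ᵥ x = c ⬝ᵥ S *ᵥ x := by
    rw [dotProduct_mulVec, dotProduct_mulVec, ← mulVec_transpose, ← mulVec_transpose, hc]
  simp only [sub_dotProduct, dotProduct_sub, dotProduct_comm (Q *ᵥ x) y,
    dotProduct_comm (S *ᵥ x) c, hQQ, hQy]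
  ring

theorem dotProduct_self_le_of_mulVec_eq {m k : Type*} [Fintype m] [Fintype k]
    {Q : Matrix m k ℝ} {S : Matrix k k ℝ} {y : m → ℝ} {c : k → ℝ}
    (hS : Sᵀ * S = Qᵀ * Q) (hc : Sᵀ *ᵥ c = Qᵀ *ᵥ y) {x : k → ℝ} (hx : S *ᵥ x = c) :
    c ⬝ᵥ c ≤ y ⬝ᵥ y := by
  have h := mulVec_sub_dotProduct_self_eq hS hc x
  rw [hx, sub_self, zero_dotProduct, zero_add, ← star_trivial (Q *ᵥ x - y)] at h
  exact sub_nonneg.1 (h ▸ dotProduct_star_self_nonneg _)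

/-- The dual variables `((u, t), v, r)`, with `(u, t)` packed as `vecCons t u : Fin (k + 1) → ℝ`. -/
def sqrtLassoDualDomain (k n : ℕ) (ε lam : ℝ) :
    Set ((Fin (k + 1) → ℝ) × (Fin n → ℝ) × (Fin n → ℝ)) :=
  {z | norm2 z ≤ 1} ×ˢ closedBall 0 lam ×ˢ {r | norm2 r ≤ ε}

theorem isCompact_sqrtLassoDualDomain (k n : ℕ) (ε lam : ℝ) :
    IsCompact (sqrtLassoDualDomain k n ε lam) :=
  (isCompact_setOf_norm2_le _ _).prod ((isCompact_closedBall _ _).prod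
    (isCompact_setOf_norm2_le _ _))

theorem convex_sqrtLassoDualDomain (k n : ℕ) (ε lam : ℝ) :
    Convex ℝ (sqrtLassoDualDomain k n ε lam) :=
  (convex_setOf_norm2_le _ _).prod ((convex_closedBall _ _).prod (convex_setOf_norm2_le _ _))

theorem zero_mem_sqrtLassoDualDomain {k n : ℕ} {ε lam : ℝ} (hε : 0 ≤ ε) (hlam : 0 ≤ lam) :
    0 ∈ sqrtLassoDualDomain k n ε lam :=
  ⟨by simp [norm2], by simpa using hlam, by simpa [norm2] using hε⟩

section SqrtLassoDual

variable {n k : ℕ} (R : Matrix (Fin n) (Fin k) ℝ) (c : Fin k → ℝ) (s : ℝ)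

def sqrtLassoDualMap :
    (Fin (k + 1) → ℝ) × (Fin n → ℝ) × (Fin n → ℝ) →ₗ[ℝ] (Fin n → ℝ) × ℝ where
  toFun q := (q.2.1 + q.2.2 - R *ᵥ vecTail q.1, vecTail q.1 ⬝ᵥ c + s * vecHead q.1)
  map_add' p q := by
    simp only [Prod.fst_add, Prod.snd_add, tail_add, head_add, mulVec_add, add_dotProduct,
      Prod.mk_add_mk, Prod.mk.injEq]
    exact ⟨by abel, by ring⟩
  map_smul' a q := by
    have hhead : vecHead (a • q.1) = a * vecHead q.1 := rfl
    have htail : vecTail (a • q.1) = a • vecTail q.1 := rfl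
    simp only [Prod.smul_fst, Prod.smul_snd, hhead, htail, mulVec_smul, smul_dotProduct,
      RingHom.id_apply, Prod.smul_mk, smul_eq_mul, smul_add, smul_sub]
    congr 1
    ring

theorem sqrtLassoDualMap_lagrangian (w : Fin n → ℝ)
    (q : (Fin (k + 1) → ℝ) × (Fin n → ℝ) × (Fin n → ℝ)) :
    w ⬝ᵥ (sqrtLassoDualMap R c s q).1 + (sqrtLassoDualMap R c s q).2 =
      q.1 ⬝ᵥ vecCons s (c - Rᵀ *ᵥ w) + (q.2.1 ⬝ᵥ w + q.2.2 ⬝ᵥ w) := by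
  have hR : w ⬝ᵥ R *ᵥ vecTail q.1 = vecTail q.1 ⬝ᵥ Rᵀ *ᵥ w := by
    rw [dotProduct_mulVec, ← mulVec_transpose, dotProduct_comm]
  simp only [sqrtLassoDualMap, LinearMap.coe_mk, AddHom.coe_mk, dotProduct_cons]
  rw [dotProduct_sub, dotProduct_add, hR, dotProduct_sub, dotProduct_comm w, dotProduct_comm w]
  ring

theorem isGreatest_lagrangian_sqrtLassoDualMap (w : Fin n → ℝ) {ε lam : ℝ} (hε : 0 ≤ ε)
    (hlam : 0 ≤ lam) :
    IsGreatest
      ((fun p => w ⬝ᵥ p.1 + p.2) '' (sqrtLassoDualMap R c s '' sqrtLassoDualDomain k n ε lam))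
      (norm2 (vecCons s (c - Rᵀ *ᵥ w)) + ε * norm2 w + lam * norm1 w) := by
  rw [image_image, sqrtLassoDualDomain]
  simp_rw [sqrtLassoDualMap_lagrangian]
  convert (isGreatest_dotProduct_norm2_le _ zero_le_one).image_prod_add
    ((isGreatest_dotProduct_closedBall w hlam).image_prod_add (isGreatest_dotProduct_norm2_le w hε))
    using 1
  rw [norm1]
  ring

theorem setOf_sqrtLassoDual_eq (ε lam : ℝ) :
    {ϕ : ℝ | ∃ (u : Fin k → ℝ) (t : ℝ) (v r : Fin n → ℝ),
      √(∑ i, u i ^ 2 + t ^ 2) ≤ 1 ∧ normInf v ≤ lam ∧ norm2 r ≤ ε ∧ R *ᵥ u = v + r ∧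
      ϕ = u ⬝ᵥ c + s * t} =
      {a | (0, a) ∈ sqrtLassoDualMap R c s '' sqrtLassoDualDomain k n ε lam} := by
  ext ϕ
  constructor
  · rintro ⟨u, t, v, r, hut, hv, hr, hRu, rfl⟩
    refine ⟨(vecCons t u, v, r), ⟨?_, ?_, hr⟩, ?_⟩
    · rwa [mem_ofPred_eq, norm2_vecCons]
    · rwa [mem_closedBall_zero_iff, ← normInf_eq_norm]
    · simp [sqrtLassoDualMap, hRu]
  · rintro ⟨⟨z, v, r⟩, ⟨hz, hv, hr⟩, hΦ⟩
    simp only [sqrtLassoDualMap, LinearMap.coe_mk, AddHom.coe_mk, Prod.mk.injEq,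
      sub_eq_zero] at hΦ
    refine ⟨vecTail z, vecHead z, v, r, ?_, ?_, hr, hΦ.1.symm, hΦ.2.symm⟩
    · rwa [← norm2_vecCons, cons_head_tail]
    · rwa [normInf_eq_norm, ← mem_closedBall_zero_iff]

theorem sInf_sqrtLasso_eq_sSup_dual {ε lam : ℝ} (hε : 0 ≤ ε) (hlam : 0 ≤ lam) :
    sInf {ϕ : ℝ | ∃ w : Fin n → ℝ,
        ϕ = norm2 (vecCons s (c - Rᵀ *ᵥ w)) + ε * norm2 w + lam * norm1 w} =
      sSup {ϕ : ℝ | ∃ (u : Fin k → ℝ) (t : ℝ) (v r : Fin n → ℝ),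
        √(∑ i, u i ^ 2 + t ^ 2) ≤ 1 ∧ normInf v ≤ lam ∧ norm2 r ≤ ε ∧ R *ᵥ u = v + r ∧
        ϕ = u ⬝ᵥ c + s * t} := by
  have hprimal : {ϕ : ℝ | ∃ w : Fin n → ℝ,
      ϕ = norm2 (vecCons s (c - Rᵀ *ᵥ w)) + ε * norm2 w + lam * norm1 w} =
      range fun w => norm2 (vecCons s (c - Rᵀ *ᵥ w)) + ε * norm2 w + lam * norm1 w :=
    Set.ext fun ϕ => exists_congr fun w => eq_comm
  rw [hprimal, setOf_sqrtLassoDual_eq]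
  exact sInf_range_eq_sSup_of_isGreatest
    ((isCompact_sqrtLassoDualDomain k n ε lam).image
      (sqrtLassoDualMap R c s).continuous_of_finiteDimensional)
    ((convex_sqrtLassoDualDomain k n ε lam).linear_image _)
    ⟨0, zero_mem_sqrtLassoDualDomain hε hlam, map_zero _⟩ _
    fun w => isGreatest_lagrangian_sqrtLassoDualMap R c s w hε hlam

end SqrtLassoDual

theorem sketched_sqrt_lasso_dual_general
    {n m k : ℕ} (P : Matrix (Fin n) (Fin k) ℝ) (Q : Matrix (Fin m) (Fin k) ℝ)
    (hK : (Qᵀ * Q).PosDef) (y : Fin m → ℝ)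
    (ε lam : ℝ) (hε : 0 ≤ ε) (hlam : 0 ≤ lam) :
    ∀ c : Fin k → ℝ, c = (hK.posSemidef.sqrt)⁻¹.mulVec (Qᵀ.mulVec y) →
    ∀ s : ℝ, s = Real.sqrt (y ⬝ᵥ y - c ⬝ᵥ c) →
    ∀ R : Matrix (Fin n) (Fin k) ℝ, R = P * hK.posSemidef.sqrt →
      sInf {ϕ : ℝ | ∃ w : Fin n → ℝ,
          ϕ = norm2 ((Q * Pᵀ).mulVec w - y) + ε * norm2 w + lam * norm1 w} =
        sSup {ϕ : ℝ | ∃ (u : Fin k → ℝ) (t : ℝ) (v r : Fin n → ℝ),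
          Real.sqrt ((∑ i, u i ^ 2) + t ^ 2) ≤ 1 ∧
          normInf v ≤ lam ∧ norm2 r ≤ ε ∧ R.mulVec u = v + r ∧
          ϕ = u ⬝ᵥ c + s * t} := by
  intro c hc s hs R hR
  set S := hK.posSemidef.sqrt
  have hSsymm : Sᵀ = S := hK.posSemidef.isHermitian_sqrt
  have hSS : Sᵀ * S = Qᵀ * Q := by rw [hSsymm, hK.posSemidef.sqrt_mul_self]
  have hSdet : IsUnit S.det := (isUnit_iff_isUnit_det S).1 hK.isUnit_sqrt
  have hSc : Sᵀ *ᵥ c = Qᵀ *ᵥ y := by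
    rw [hSsymm, hc, mulVec_mulVec, mul_nonsing_inv _ hSdet, one_mulVec]
  have hSx : S *ᵥ S⁻¹ *ᵥ c = c := by rw [mulVec_mulVec, mul_nonsing_inv _ hSdet, one_mulVec]
  have hs2 : s * s = y ⬝ᵥ y - c ⬝ᵥ c := by
    rw [hs, Real.mul_self_sqrt (sub_nonneg.2 (dotProduct_self_le_of_mulVec_eq hSS hSc hSx))]
  have hobj : ∀ w, norm2 ((Q * Pᵀ) *ᵥ w - y) = norm2 (vecCons s (c - Rᵀ *ᵥ w)) := fun w => by
    rw [norm2_eq_sqrt_dotProduct, norm2_eq_sqrt_dotProduct, cons_dotProduct_cons, ← mulVec_mulVec,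
      mulVec_sub_dotProduct_self_eq hSS hSc, hR, transpose_mul, hSsymm, ← mulVec_mulVec, hs2,
      add_comm]
  simp_rw [hobj]
  exact sInf_sqrtLasso_eq_sSup_dual R c s hε hlam

/-- Strong duality between the regularized square-root LASSO with sketch `X̂ = PQᵀ` and its
dual: with `K := QᵀQ` positive definite, `c := K^{-1/2}Qᵀy`, `s := √(yᵀy − cᵀc)`, and
`R := P K^{1/2}`, `min_w ‖QPᵀw − y‖₂ + ε‖w‖₂ + λ‖w‖₁` equals
`max { uᵀc + s t : ‖(u,t)‖₂ ≤ 1, ‖v‖_∞ ≤ λ, ‖r‖₂ ≤ ε, Ru = v + r }`. -/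
theorem sketched_sqrt_lasso_dual
    {n m k : ℕ} (P : Matrix (Fin n) (Fin k) ℝ) (Q : Matrix (Fin m) (Fin k) ℝ)
    (hQ : Q.rank = k) (hK : (Qᵀ * Q).PosDef) (y : Fin m → ℝ)
    (ε lam : ℝ) (hε : 0 ≤ ε) (hlam : 0 ≤ lam) :
    ∀ c : Fin k → ℝ, c = (hK.posSemidef.sqrt)⁻¹.mulVec (Qᵀ.mulVec y) →
    ∀ s : ℝ, s = Real.sqrt (y ⬝ᵥ y - c ⬝ᵥ c) →
    ∀ R : Matrix (Fin n) (Fin k) ℝ, R = P * hK.posSemidef.sqrt →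
      sInf {ϕ : ℝ | ∃ w : Fin n → ℝ,
          ϕ = norm2 ((Q * Pᵀ).mulVec w - y) + ε * norm2 w + lam * norm1 w} =
        sSup {ϕ : ℝ | ∃ (u : Fin k → ℝ) (t : ℝ) (v r : Fin n → ℝ),
          Real.sqrt ((∑ i, u i ^ 2) + t ^ 2) ≤ 1 ∧
          normInf v ≤ lam ∧ norm2 r ≤ ε ∧ R.mulVec u = v + r ∧
          ϕ = u ⬝ᵥ c + s * t} :=
  sketched_sqrt_lasso_dual_general P Q hK y ε lam hε hlam
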